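/- Consider the scalar test equation corresponding to the gyromagnetic GSPM: for λ ≤ 0 and the update (3/2)u^{n+1} - 2u^n + (1/2)u^{n-1} = tλ·û^{n+1} with û^{n+1} = 2u^n - u^{n-1}, the characteristic polynomial is (3/2)z² - (2 + 2tλ)z + (1/2 + tλ). If -1 ≤ tλ ≤ 0, then every complex root z of (3/2)z² - (2+2tλ)z + (1/2+tλ) = 0 satisfies |z| ≤ 1. -/

import Mathlib

theorem bdf2_characteristic_roots (t l : ℝ) (h1 : -1 ≤ t * l) (h2 : t * l ≤ 0)
    (z : ℂ)
    (hz : (3 / 2 : ℂ) * z ^ 2 - (2 + 2 * (t * l : ℝ)) * z + (1 / 2 + (t * l : ℝ)) = 0) :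
    ‖z‖ ≤ 1 := by
  set μ : ℝ := t * l with hμ
  set D : ℝ := Real.sqrt (4 * μ ^ 2 + 2 * μ + 1) with hD
  have hpos : 0 ≤ 4 * μ ^ 2 + 2 * μ + 1 := by nlinarith [sq_nonneg (2 * μ + 1 / 2)]
  have hD2 : D ^ 2 = 4 * μ ^ 2 + 2 * μ + 1 := Real.sq_sqrt hpos
  have hDnn : 0 ≤ D := Real.sqrt_nonneg _
  have hc : (D : ℂ) ^ 2 = 4 * (μ : ℂ) ^ 2 + 2 * μ + 1 := by exact_mod_cast hD2
  have hfac : (3 / 2 : ℂ) * (z - (((2 + 2 * μ + D) / 3 : ℝ) : ℂ)) *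
      (z - (((2 + 2 * μ - D) / 3 : ℝ) : ℂ)) = 0 := by
    push_cast
    linear_combination hz - (1 / 6 : ℂ) * hc
  have h32 : (3 / 2 : ℂ) ≠ 0 := by norm_num
  rcases mul_eq_zero.mp hfac with h | h
  · rcases mul_eq_zero.mp h with h | h
    · exact absurd h h32
    · have hzr : z = (((2 + 2 * μ + D) / 3 : ℝ) : ℂ) := sub_eq_zero.mp h
      rw [hzr, Complex.norm_real, Real.norm_eq_abs, abs_le]
      constructor
      · nlinarith
      · -- D ≤ 1 - 2μ
        have hDle : D ≤ 1 - 2 * μ := by nlinarith [sq_nonneg (D - (1 - 2 * μ))]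
        nlinarith
  · have hzr : z = (((2 + 2 * μ - D) / 3 : ℝ) : ℂ) := sub_eq_zero.mp h
    rw [hzr, Complex.norm_real, Real.norm_eq_abs, abs_le]
    constructor
    · have hDle : D ≤ 5 + 2 * μ := by nlinarith [sq_nonneg (D - (5 + 2 * μ))]
      nlinarith
    · nlinarith
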